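/- As operators on smooth functions of (x, p_0, p_1, …) depending on finitely many variables, (D_2 ∂_2 − ∂_1) ∘ E_2^2 = D_2^3 ∘ ∂_2^2; that is, for every such smooth function F, D_2 ∂_2 (E_2^2 F) − ∂_1 (E_2^2 F) = D_2^3 (∂_2^2 F). -/

import Mathlib

/-!
Common framework: smooth functions of `(x, p₀, p₁, p₂, …)` depending on finitely
many variables, truncated total differential operators `D m`, and truncated
Euler–Lagrange operators `E m n`.
-/

/-- A "function of `(x, p₀, p₁, …)`". -/
abbrev Fn : Type := ℝ → (ℕ → ℝ) → ℝ

/-- Partial derivative in the variable `p k`. -/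
noncomputable def pd (k : ℕ) (F : Fn) : Fn :=
  fun x p => deriv (fun t => F x (Function.update p k t)) (p k)

/-- Partial derivative in the variable `x`. -/
noncomputable def pdx (F : Fn) : Fn :=
  fun x p => deriv (fun t => F t p) x

/-- The truncated total differential operator
`D m = ∂ₓ + p₁ ∂₀ + p₂ ∂₁ + ⋯ + p_m ∂_{m-1}` (for `m = 0` it is just `∂ₓ`). -/
noncomputable def D (m : ℕ) (F : Fn) : Fn :=
  fun x p => pdx F x p + ∑ k ∈ Finset.range m, p (k + 1) * pd k F x p

/-- The `m`-th order Euler–Lagrange operator with `n+1` terms,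
`E m n = Σ_{k=0}^n (-1)^k (D m)^k ∂_k`. -/
noncomputable def E (m n : ℕ) (F : Fn) : Fn :=
  fun x p => ∑ k ∈ Finset.range (n + 1), (-1 : ℝ) ^ k * ((D m)^[k] (pd k F)) x p

/-- `F` depends only on the variables `x, p₀, …, p_{M-1}`. -/
def FnDependsOn (F : Fn) (M : ℕ) : Prop :=
  ∀ (x : ℝ) (p q : ℕ → ℝ), (∀ i, i < M → p i = q i) → F x p = F x q

/-- `F` depends only on `x, p₀, …, p_{M-1}` and is smooth as a function of those
finitely many variables. -/
def SmoothUpTo (F : Fn) (M : ℕ) : Prop :=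
  FnDependsOn F M ∧
    ContDiff ℝ (⊤ : ℕ∞) (fun v : ℝ × (Fin M → ℝ) =>
      F v.1 (fun i => if h : i < M then v.2 ⟨i, h⟩ else 0))

/-- `F` is a smooth function depending on finitely many of the variables. -/
def SmoothFn (F : Fn) : Prop := ∃ M, SmoothUpTo F M

/-- Antiderivative in `p k` vanishing at `p k = 0`:  `∫^{p_k} F`. -/
noncomputable def pint (k : ℕ) (F : Fn) : Fn :=
  fun x p => ∫ t in (0 : ℝ)..(p k), F x (Function.update p k t)

/-- Second antiderivative in `p k`:  `∫^{p_k} ∫ F`. -/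
noncomputable def pint2 (k : ℕ) (F : Fn) : Fn := pint k (pint k F)

/-- Antiderivative in `x` vanishing at `x = 0`:  `∫^x F`. -/
noncomputable def xint (F : Fn) : Fn :=
  fun x p => ∫ t in (0 : ℝ)..x, F t p

/-- `e^{-F}`. -/
noncomputable def negExpF (F : Fn) : Fn := fun x p => Real.exp (-F x p)

open Function

variable {M : ℕ} {F A B C A' : Fn}

/-- Extend a finite vector by zeros. -/
def extFn (M : ℕ) (w : Fin M → ℝ) : ℕ → ℝ := fun i => if h : i < M then w ⟨i, h⟩ else 0

/-- The finite-dimensional representative of `F`. -/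
def rep (M : ℕ) (F : Fn) : ℝ × (Fin M → ℝ) → ℝ := fun v => F v.1 (extFn M v.2)

/-- Truncation of an infinite vector. -/
def projV (M : ℕ) (p : ℕ → ℝ) : Fin M → ℝ := fun i => p i

lemma F_eq_rep (hdep : FnDependsOn F M) (x : ℝ) (p : ℕ → ℝ) :
    F x p = rep M F (x, projV M p) := by
  apply hdep
  intro i hi
  simp [extFn, projV, hi]

lemma projV_update (p : ℕ → ℝ) {k : ℕ} (hk : k < M) (t : ℝ) :
    projV M (Function.update p k t) = Function.update (projV M p) ⟨k, hk⟩ t := by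
  funext i
  simp only [projV, Function.update_apply]
  by_cases h : (i : ℕ) = k
  · simp [h, Fin.ext_iff]
  · simp [h, Fin.ext_iff]

lemma projV_extFn (w : Fin M → ℝ) : projV M (extFn M w) = w := by
  funext i
  simp [projV, extFn, i.isLt]

lemma hasDerivAt_sectP (hF : SmoothUpTo F M) {k : ℕ} (hk : k < M) (x : ℝ) (p : ℕ → ℝ) (t : ℝ) :
    HasDerivAt (fun s => F x (Function.update p k s))
      (fderiv ℝ (rep M F) (x, Function.update (projV M p) ⟨k, hk⟩ t) (0, Pi.single ⟨k, hk⟩ 1)) t := by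
  have hfun : (fun s => F x (Function.update p k s))
      = fun s => rep M F (x, Function.update (projV M p) ⟨k, hk⟩ s) := by
    funext s
    rw [F_eq_rep hF.1, projV_update p hk]
  rw [hfun]
  have hcurve : HasDerivAt
      (fun s => ((x, Function.update (projV M p) ⟨k, hk⟩ s) : ℝ × (Fin M → ℝ)))
      ((0 : ℝ), Pi.single ⟨k, hk⟩ (1 : ℝ)) t :=
    (hasDerivAt_const t x).prodMk (hasDerivAt_update (projV M p) ⟨k, hk⟩ t)
  exact ((hF.2.differentiable (by simp) _).hasFDerivAt).comp_hasDerivAt t hcurve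

lemma hasDerivAt_sectX (hF : SmoothUpTo F M) (p : ℕ → ℝ) (t : ℝ) :
    HasDerivAt (fun s => F s p) (fderiv ℝ (rep M F) (t, projV M p) (1, 0)) t := by
  have hfun : (fun s => F s p) = fun s => rep M F (s, projV M p) := by
    funext s; exact F_eq_rep hF.1 s p
  rw [hfun]
  have hcurve : HasDerivAt (fun s => ((s, projV M p) : ℝ × (Fin M → ℝ)))
      ((1 : ℝ), (0 : Fin M → ℝ)) t :=
    (hasDerivAt_id t).prodMk (hasDerivAt_const t (projV M p))
  exact ((hF.2.differentiable (by simp) _).hasFDerivAt).comp_hasDerivAt t hcurve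

lemma pd_eq (hF : SmoothUpTo F M) {k : ℕ} (hk : k < M) (x : ℝ) (p : ℕ → ℝ) :
    pd k F x p = fderiv ℝ (rep M F) (x, projV M p) (0, Pi.single ⟨k, hk⟩ 1) := by
  have h := hasDerivAt_sectP hF hk x p (p k)
  rw [show Function.update (projV M p) ⟨k, hk⟩ (p k) = projV M p from Function.update_eq_self _ _] at h
  exact h.deriv

lemma pdx_eq (hF : SmoothUpTo F M) (x : ℝ) (p : ℕ → ℝ) :
    pdx F x p = fderiv ℝ (rep M F) (x, projV M p) (1, 0) :=
  (hasDerivAt_sectX hF p x).deriv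

lemma rep_pd (hF : SmoothUpTo F M) {k : ℕ} (hk : k < M) :
    rep M (pd k F) = fun v => fderiv ℝ (rep M F) v (0, Pi.single ⟨k, hk⟩ 1) := by
  funext v
  show pd k F v.1 (extFn M v.2) = _
  rw [pd_eq hF hk, projV_extFn]

lemma rep_pdx (hF : SmoothUpTo F M) :
    rep M (pdx F) = fun v => fderiv ℝ (rep M F) v (1, 0) := by
  funext v
  show pdx F v.1 (extFn M v.2) = _
  rw [pdx_eq hF, projV_extFn]

lemma contDiff_fderiv_apply {G : ℝ × (Fin M → ℝ) → ℝ} (hG : ContDiff ℝ (⊤ : ℕ∞) G)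
    (u : ℝ × (Fin M → ℝ)) : ContDiff ℝ (⊤ : ℕ∞) (fun v => fderiv ℝ G v u) :=
  (hG.fderiv_right (by simp)).clm_apply contDiff_const

lemma SmoothUpTo.pd (hF : SmoothUpTo F M) {k : ℕ} (hk : k < M) : SmoothUpTo (pd k F) M := by
  constructor
  · intro x p q hpq
    show deriv _ _ = deriv _ _
    have h1 : p k = q k := hpq k hk
    have h2 : (fun t => F x (Function.update p k t)) = fun t => F x (Function.update q k t) := by
      funext t
      refine hF.1 x _ _ fun i hi => ?_
      by_cases h : i = k <;> simp [Function.update_apply, h, hpq i hi]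
    rw [h1, h2]
  · show ContDiff ℝ (⊤ : ℕ∞) (rep M (_root_.pd k F))
    rw [rep_pd hF hk]
    exact contDiff_fderiv_apply hF.2 _

lemma SmoothUpTo.pdx (hF : SmoothUpTo F M) : SmoothUpTo (pdx F) M := by
  constructor
  · intro x p q hpq
    show deriv _ _ = deriv _ _
    have h2 : (fun t => F t p) = fun t => F t q := by
      funext t; exact hF.1 t _ _ hpq
    rw [h2]
  · show ContDiff ℝ (⊤ : ℕ∞) (rep M (_root_.pdx F))
    rw [rep_pdx hF]
    exact contDiff_fderiv_apply hF.2 _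

lemma fderiv_swap {G : ℝ × (Fin M → ℝ) → ℝ} (hG : ContDiff ℝ (⊤ : ℕ∞) G)
    (z a b : ℝ × (Fin M → ℝ)) :
    fderiv ℝ (fun v => fderiv ℝ G v a) z b = fderiv ℝ (fun v => fderiv ℝ G v b) z a := by
  have hd : DifferentiableAt ℝ (fderiv ℝ G) z :=
    ((hG.fderiv_right (m := (⊤ : ℕ∞)) (by simp)).differentiable (by simp)) z
  have key : ∀ u w : ℝ × (Fin M → ℝ),
      fderiv ℝ (fun v => fderiv ℝ G v u) z w = fderiv ℝ (fderiv ℝ G) z w u := by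
    intro u w
    rw [show (fun v => fderiv ℝ G v u) = fun v => (fderiv ℝ G v) ((fun _ => u) v) from rfl]
    rw [fderiv_clm_apply hd (differentiableAt_const u)]
    simp
  rw [key a b, key b a]
  exact hG.contDiffAt.isSymmSndFDerivAt (by simp [minSmoothness_of_isRCLikeNormedField]; exact WithTop.coe_le_coe.mpr (le_top : (2 : ℕ∞) ≤ ⊤)) b a

lemma pd_pd_comm (hF : SmoothUpTo F M) {j k : ℕ} (hj : j < M) (hk : k < M)
    (x : ℝ) (p : ℕ → ℝ) : pd j (pd k F) x p = pd k (pd j F) x p := by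
  rw [pd_eq (hF.pd hk) hj, pd_eq (hF.pd hj) hk, rep_pd hF hk, rep_pd hF hj]
  exact fderiv_swap hF.2 _ _ _

lemma pdx_pd_comm (hF : SmoothUpTo F M) {k : ℕ} (hk : k < M)
    (x : ℝ) (p : ℕ → ℝ) : pd k (pdx F) x p = pdx (pd k F) x p := by
  rw [pd_eq hF.pdx hk, pdx_eq (hF.pd hk), rep_pdx hF, rep_pd hF hk]
  exact fderiv_swap hF.2 _ _ _

lemma SmoothUpTo.mono (hF : SmoothUpTo F M) {N : ℕ} (hMN : M ≤ N) : SmoothUpTo F N := by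
  have hdep : FnDependsOn F N := fun x p q h => hF.1 x p q fun i hi => h i (lt_of_lt_of_le hi hMN)
  refine ⟨hdep, ?_⟩
  show ContDiff ℝ (⊤ : ℕ∞) (rep N F)
  have hL : ContDiff ℝ (⊤ : ℕ∞) (fun v : ℝ × (Fin N → ℝ) =>
      ((v.1, fun i : Fin M => v.2 (Fin.castLE hMN i)) : ℝ × (Fin M → ℝ))) := by
    refine contDiff_fst.prodMk ?_
    exact contDiff_pi.2 fun i => (ContinuousLinearMap.proj (R := ℝ)
      (φ := fun _ : Fin N => ℝ) (Fin.castLE hMN i)).contDiff.comp contDiff_snd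
  have heq : rep N F = fun v : ℝ × (Fin N → ℝ) =>
      rep M F (v.1, fun i : Fin M => v.2 (Fin.castLE hMN i)) := by
    funext v
    apply hF.1
    intro i hi
    simp [extFn, hi, lt_of_lt_of_le hi hMN]
  rw [heq]
  exact hF.2.comp hL

lemma SmoothUpTo.addFn (hA : SmoothUpTo A M) (hB : SmoothUpTo B M) :
    SmoothUpTo (fun x p => A x p + B x p) M := by
  refine ⟨fun x p q h => ?_, hA.2.add hB.2⟩
  show A x p + B x p = A x q + B x q
  rw [hA.1 x p q h, hB.1 x p q h]

lemma SmoothUpTo.coordMul (hB : SmoothUpTo B M) {i : ℕ} (hi : i < M) :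
    SmoothUpTo (fun x p => p i * B x p) M := by
  refine ⟨fun x p q h => ?_, ?_⟩
  · show p i * B x p = q i * B x q
    rw [hB.1 x p q h, h i hi]
  show ContDiff ℝ (⊤ : ℕ∞) (rep M (fun x p => p i * B x p))
  have heq : rep M (fun x p => p i * B x p)
      = fun v : ℝ × (Fin M → ℝ) => v.2 ⟨i, hi⟩ * rep M B v := by
    funext v
    show extFn M v.2 i * B v.1 (extFn M v.2) = _
    simp [extFn, hi, rep]
  rw [heq]
  exact (((ContinuousLinearMap.proj (R := ℝ) (φ := fun _ : Fin M => ℝ)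
    ⟨i, hi⟩).contDiff).comp contDiff_snd).mul hB.2

lemma D2_eq (B : Fn) : D 2 B = fun x p =>
    pdx B x p + (p 1 * pd 0 B x p + p 2 * pd 1 B x p) := by
  funext x p
  show pdx B x p + _ = _
  rw [Finset.sum_range_succ, Finset.sum_range_succ, Finset.sum_range_zero]
  norm_num

lemma SmoothUpTo.D2 (hB : SmoothUpTo B M) (h2 : 2 < M) : SmoothUpTo (D 2 B) M := by
  rw [D2_eq B]
  exact hB.pdx.addFn (((hB.pd (by omega)).coordMul (by omega : 1 < M)).addFn
    ((hB.pd (by omega)).coordMul h2))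

lemma E22_eq (F : Fn) : E 2 2 F = fun x p =>
    pd 0 F x p - D 2 (pd 1 F) x p + D 2 (D 2 (pd 2 F)) x p := by
  funext x p
  show (∑ k ∈ Finset.range 3, (-1 : ℝ) ^ k * ((D 2)^[k] (pd k F)) x p) = _
  rw [Finset.sum_range_succ, Finset.sum_range_succ, Finset.sum_range_succ,
    Finset.sum_range_zero]
  simp [Function.iterate_succ_apply', sub_eq_add_neg]

lemma hasDerivAt_pd (hA : SmoothUpTo A M) {k : ℕ} (hk : k < M) (x : ℝ) (p : ℕ → ℝ) :
    HasDerivAt (fun s => A x (Function.update p k s)) (pd k A x p) (p k) := by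
  have h := hasDerivAt_sectP hA hk x p (p k)
  rw [show Function.update (projV M p) ⟨k, hk⟩ (p k) = projV M p from
    Function.update_eq_self _ _] at h
  rwa [← pd_eq hA hk] at h

lemma hasDerivAt_pdx (hA : SmoothUpTo A M) (x : ℝ) (p : ℕ → ℝ) :
    HasDerivAt (fun s => A s p) (pdx A x p) x := by
  have h := hasDerivAt_sectX hA p x
  rwa [← pdx_eq hA] at h

lemma pd_comb2 (hA : SmoothUpTo A M) (hB : SmoothUpTo B M) {k : ℕ} (hk : k < M)
    (x : ℝ) (p : ℕ → ℝ) :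
    pd k (fun x p => A x p + B x p) x p = pd k A x p + pd k B x p :=
  ((hasDerivAt_pd hA hk x p).add (hasDerivAt_pd hB hk x p)).deriv

lemma pd_comb3 (hA : SmoothUpTo A M) (hB : SmoothUpTo B M) (hC : SmoothUpTo C M)
    {k : ℕ} (hk : k < M) (x : ℝ) (p : ℕ → ℝ) :
    pd k (fun x p => A x p - B x p + C x p) x p
      = pd k A x p - pd k B x p + pd k C x p :=
  (((hasDerivAt_pd hA hk x p).sub (hasDerivAt_pd hB hk x p)).add
    (hasDerivAt_pd hC hk x p)).deriv

lemma pd_comb4 (hA : SmoothUpTo A M) (hB : SmoothUpTo B M) (hC : SmoothUpTo C M)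
    (hA' : SmoothUpTo A' M) {k : ℕ} (hk : k < M) (x : ℝ) (p : ℕ → ℝ) :
    pd k (fun x p => 2 * A x p + B x p - C x p + A' x p) x p
      = 2 * pd k A x p + pd k B x p - pd k C x p + pd k A' x p :=
  ((((hasDerivAt_pd hA hk x p).const_mul 2).add (hasDerivAt_pd hB hk x p)).sub
    (hasDerivAt_pd hC hk x p)).add (hasDerivAt_pd hA' hk x p) |>.deriv

lemma pdx_comb2 (hA : SmoothUpTo A M) (hB : SmoothUpTo B M) (x : ℝ) (p : ℕ → ℝ) :
    pdx (fun x p => A x p + B x p) x p = pdx A x p + pdx B x p :=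
  ((hasDerivAt_pdx hA x p).add (hasDerivAt_pdx hB x p)).deriv

lemma pdx_comb4 (hA : SmoothUpTo A M) (hB : SmoothUpTo B M) (hC : SmoothUpTo C M)
    (hA' : SmoothUpTo A' M) (x : ℝ) (p : ℕ → ℝ) :
    pdx (fun x p => 2 * A x p + B x p - C x p + A' x p) x p
      = 2 * pdx A x p + pdx B x p - pdx C x p + pdx A' x p :=
  ((((hasDerivAt_pdx hA x p).const_mul 2).add (hasDerivAt_pdx hB x p)).sub
    (hasDerivAt_pdx hC x p)).add (hasDerivAt_pdx hA' x p) |>.deriv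

lemma pd_coordMul (hB : SmoothUpTo B M) {i k : ℕ} (hi : i < M) (hk : k < M)
    (x : ℝ) (p : ℕ → ℝ) :
    pd k (fun x p => p i * B x p) x p
      = (if k = i then B x p else 0) + p i * pd k B x p := by
  show deriv (fun t => Function.update p k t i * B x (Function.update p k t)) (p k) = _
  rcases eq_or_ne k i with rfl | hne
  · have h1 : (fun t => Function.update p k t k * B x (Function.update p k t))
        = fun t => t * B x (Function.update p k t) := by
      funext t; rw [Function.update_self]
    have hd : HasDerivAt (fun t => t * B x (Function.update p k t))
        (1 * B x (Function.update p k (p k)) + p k * pd k B x p) (p k) :=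
      (hasDerivAt_id' (x := p k)).mul (hasDerivAt_pd hB hk x p)
    rw [h1, hd.deriv]
    simp [Function.update_eq_self]
  · have h1 : (fun t => Function.update p k t i * B x (Function.update p k t))
        = fun t => p i * B x (Function.update p k t) := by
      funext t; rw [Function.update_of_ne hne.symm]
    rw [h1, deriv_const_mul_field, if_neg hne, zero_add]
    rfl

lemma D2_apply (B : Fn) (x : ℝ) (p : ℕ → ℝ) :
    D 2 B x p = pdx B x p + (p 1 * pd 0 B x p + p 2 * pd 1 B x p) :=
  congrFun (congrFun (D2_eq B) x) p

lemma D2_comb2 (hA : SmoothUpTo A M) (hB : SmoothUpTo B M) (h2 : 2 < M)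
    (x : ℝ) (p : ℕ → ℝ) :
    D 2 (fun x p => A x p + B x p) x p = D 2 A x p + D 2 B x p := by
  have h0 : 0 < M := by omega
  have h1 : 1 < M := by omega
  rw [D2_apply, D2_apply, D2_apply, pdx_comb2 hA hB, pd_comb2 hA hB h0,
    pd_comb2 hA hB h1]
  ring

lemma D2_comb4 (hA : SmoothUpTo A M) (hB : SmoothUpTo B M) (hC : SmoothUpTo C M)
    (hA' : SmoothUpTo A' M) (h2 : 2 < M) (x : ℝ) (p : ℕ → ℝ) :
    D 2 (fun x p => 2 * A x p + B x p - C x p + A' x p) x p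
      = 2 * D 2 A x p + D 2 B x p - D 2 C x p + D 2 A' x p := by
  have h0 : 0 < M := by omega
  have h1 : 1 < M := by omega
  rw [D2_apply, D2_apply, D2_apply, D2_apply, D2_apply, pdx_comb4 hA hB hC hA',
    pd_comb4 hA hB hC hA' h0, pd_comb4 hA hB hC hA' h1]
  ring

private lemma aux_smooth1 (h2 : 2 < M) (hB : SmoothUpTo B M) :
    SmoothUpTo (fun x p => p 1 * pd 0 B x p) M :=
  (hB.pd (by omega)).coordMul (by omega)

private lemma aux_smooth2 (h2 : 2 < M) (hB : SmoothUpTo B M) :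
    SmoothUpTo (fun x p => p 2 * pd 1 B x p) M :=
  (hB.pd (by omega)).coordMul h2

lemma pd0_D2 (hB : SmoothUpTo B M) (h2 : 2 < M) (x : ℝ) (p : ℕ → ℝ) : pd 0 (D 2 B) x p = D 2 (pd 0 B) x p := by
  have h0 : 0 < M := by omega
  have h1 : 1 < M := by omega
  rw [D2_eq B,
    pd_comb2 hB.pdx ((aux_smooth1 h2 hB).addFn (aux_smooth2 h2 hB)) h0,
    pd_comb2 (aux_smooth1 h2 hB) (aux_smooth2 h2 hB) h0,
    pd_coordMul (hB.pd h0) h1 h0, pd_coordMul (hB.pd h1) h2 h0,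
    pdx_pd_comm hB h0, pd_pd_comm hB h0 h1, D2_apply]
  norm_num

lemma pd1_D2 (hB : SmoothUpTo B M) (h2 : 2 < M) (x : ℝ) (p : ℕ → ℝ) :
    pd 1 (D 2 B) x p = D 2 (pd 1 B) x p + pd 0 B x p := by
  have h0 : 0 < M := by omega
  have h1 : 1 < M := by omega
  rw [D2_eq B,
    pd_comb2 hB.pdx ((aux_smooth1 h2 hB).addFn (aux_smooth2 h2 hB)) h1,
    pd_comb2 (aux_smooth1 h2 hB) (aux_smooth2 h2 hB) h1,
    pd_coordMul (hB.pd h0) h1 h1, pd_coordMul (hB.pd h1) h2 h1,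
    pdx_pd_comm hB h1, pd_pd_comm hB h1 h0, D2_apply]
  norm_num
  ring

lemma pd2_D2 (hB : SmoothUpTo B M) (h2 : 2 < M) (x : ℝ) (p : ℕ → ℝ) :
    pd 2 (D 2 B) x p = D 2 (pd 2 B) x p + pd 1 B x p := by
  have h0 : 0 < M := by omega
  have h1 : 1 < M := by omega
  rw [D2_eq B,
    pd_comb2 hB.pdx ((aux_smooth1 h2 hB).addFn (aux_smooth2 h2 hB)) h2,
    pd_comb2 (aux_smooth1 h2 hB) (aux_smooth2 h2 hB) h2,
    pd_coordMul (hB.pd h0) h1 h2, pd_coordMul (hB.pd h1) h2 h2,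
    pdx_pd_comm hB h2, pd_pd_comm hB h2 h0, pd_pd_comm hB h2 h1, D2_apply]
  norm_num
  ring


/-- `(D₂ ∂₂ - ∂₁) ∘ E₂² = D₂³ ∘ ∂₂²`. -/
theorem D2pd2_sub_pd1_E22 (F : Fn) (hF : SmoothFn F) (x : ℝ) (p : ℕ → ℝ) :
    D 2 (pd 2 (E 2 2 F)) x p - pd 1 (E 2 2 F) x p =
      (D 2)^[3] (pd 2 (pd 2 F)) x p := by
  obtain ⟨M0, hF0⟩ := hF
  have hFM : SmoothUpTo F (M0 + 3) := hF0.mono (by omega)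
  set m : ℕ := M0 + 3 with hm
  have h2 : 2 < m := by omega
  have h1 : 1 < m := by omega
  have h0 : 0 < m := by omega
  -- smoothness of the pieces
  have hp0 : SmoothUpTo (pd 0 F) m := hFM.pd h0
  have hp1 : SmoothUpTo (pd 1 F) m := hFM.pd h1
  have hp2 : SmoothUpTo (pd 2 F) m := hFM.pd h2
  have hp22 : SmoothUpTo (pd 2 (pd 2 F)) m := hp2.pd h2
  have hp12 : SmoothUpTo (pd 1 (pd 2 F)) m := hp2.pd h1
  have hp02 : SmoothUpTo (pd 0 (pd 2 F)) m := hp2.pd h0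
  have hp11 : SmoothUpTo (pd 1 (pd 1 F)) m := hp1.pd h1
  have hDp1 : SmoothUpTo (D 2 (pd 1 F)) m := hp1.D2 h2
  have hDp2 : SmoothUpTo (D 2 (pd 2 F)) m := hp2.D2 h2
  have hDDp2 : SmoothUpTo (D 2 (D 2 (pd 2 F))) m := hDp2.D2 h2
  have hD12 : SmoothUpTo (D 2 (pd 1 (pd 2 F))) m := hp12.D2 h2
  have hD22 : SmoothUpTo (D 2 (pd 2 (pd 2 F))) m := hp22.D2 h2
  have hDD22 : SmoothUpTo (D 2 (D 2 (pd 2 (pd 2 F)))) m := hD22.D2 h2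
  -- functional swap lemmas
  have e21 : pd 2 (pd 1 F) = pd 1 (pd 2 F) :=
    funext fun x => funext fun p => pd_pd_comm hFM h2 h1 x p
  have e2D : pd 2 (D 2 (pd 2 F))
      = fun x p => D 2 (pd 2 (pd 2 F)) x p + pd 1 (pd 2 F) x p :=
    funext fun x => funext fun p => pd2_D2 hp2 h2 x p
  have e1D : pd 1 (D 2 (pd 2 F))
      = fun x p => D 2 (pd 1 (pd 2 F)) x p + pd 0 (pd 2 F) x p :=
    funext fun x => funext fun p => pd1_D2 hp2 h2 x p
  -- ∂₂(E₂² F) in normal form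
  have hpd2E : pd 2 (E 2 2 F) = fun x p =>
      2 * pd 0 (pd 2 F) x p + D 2 (pd 1 (pd 2 F)) x p - pd 1 (pd 1 F) x p
        + D 2 (D 2 (pd 2 (pd 2 F))) x p := by
    funext x p
    rw [E22_eq F, pd_comb3 hp0 hDp1 hDDp2 h2, pd_pd_comm hFM h2 h0,
      pd2_D2 hp1 h2, e21, pd2_D2 hDp2 h2, e2D, D2_comb2 hD22 hp12 h2,
      pd1_D2 hp2 h2]
    ring
  -- ∂₁(E₂² F) in normal form (pointwise at x, p)
  have hpd1E : pd 1 (E 2 2 F) x p =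
      2 * D 2 (pd 0 (pd 2 F)) x p + D 2 (D 2 (pd 1 (pd 2 F))) x p
        - D 2 (pd 1 (pd 1 F)) x p := by
    rw [E22_eq F, pd_comb3 hp0 hDp1 hDDp2 h1, pd_pd_comm hFM h1 h0,
      pd1_D2 hp1 h2, pd1_D2 hDp2 h2, e1D, D2_comb2 hD12 hp02 h2,
      pd0_D2 hp2 h2]
    ring
  have hDpd2E : D 2 (pd 2 (E 2 2 F)) x p =
      2 * D 2 (pd 0 (pd 2 F)) x p + D 2 (D 2 (pd 1 (pd 2 F))) x p
        - D 2 (pd 1 (pd 1 F)) x p + D 2 (D 2 (D 2 (pd 2 (pd 2 F)))) x p := by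
    rw [hpd2E, D2_comb4 hp02 hD12 hp11 hDD22 h2]
  rw [hDpd2E, hpd1E]
  show _ = D 2 (D 2 (D 2 (pd 2 (pd 2 F)))) x p
  ring
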